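/- Let X be a finite set, ω a finitely supported signed measure on X, and ξ, φ : X → ℝ with ⟨ω, φ⟩ ≠ 1 as needed. Then for every n ≥ 1, applying the operator ⟨ω, ξ∂⟩ n times to the function e^{⟨ω, φ⟩} yields (Σ_{k=1}^{n} ⟨ω^{⊗k}, (S(n,k)ξ^{⊗n})·φ^{⊗k}⟩)·e^{⟨ω,φ⟩}, where (S(n,k)ξ^{⊗n})·φ^{⊗k} denotes the pointwise product of the symmetric function S(n,k)ξ^{⊗n} with φ(x₁)⋯φ(x_k). -/

import Mathlib

open Finset

section Defs

variable {X : Type*} [Fintype X] [DecidableEq X]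

/-- The falling factorial measure `(ω)_n` on `X^n`, given by the density
`(ω)_n(y₁,…,y_n) = ω(y₁)(ω(y₂)−δ_{y₁}(y₂))⋯(ω(y_n)−δ_{y₁}(y_n)−⋯−δ_{y_{n−1}}(y_n))`. -/
noncomputable def ff (ω : X → ℝ) : (n : ℕ) → (Fin n → X) → ℝ
  | 0 => fun _ => 1
  | n + 1 => fun y =>
      ff ω n (fun i => y i.castSucc) *
        (ω (y (Fin.last n)) - ∑ i : Fin n, if y i.castSucc = y (Fin.last n) then (1 : ℝ) else 0)

/-- Dirac measure at `x`. -/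
noncomputable def diracMeas (x : X) : X → ℝ := fun a => if a = x then 1 else 0

/-- The measure `δ_{x₁}+⋯+δ_{x_k}` of a multiset `[x₁,…,x_k]`. -/
noncomputable def msMeas {k : ℕ} (x : Fin k → X) : X → ℝ :=
  fun a => ((Finset.univ.filter (fun i => x i = a)).card : ℝ)

/-- Integration `⟨μ, f⟩` of a function against a measure on `X^n`. -/
noncomputable def pairing (n : ℕ) (μ f : (Fin n → X) → ℝ) : ℝ :=
  ∑ y : Fin n → X, μ y * f y

/-- Symmetrization of a function/measure on `X^n`. -/
noncomputable def symmFun (n : ℕ) (μ : (Fin n → X) → ℝ) : (Fin n → X) → ℝ :=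
  fun y => (∑ π : Equiv.Perm (Fin n), μ (y ∘ π)) / n.factorial

/-- Tensor product of measures/functions on `X^k` and `X^m`. -/
noncomputable def tensFun {k m : ℕ} (μ : (Fin k → X) → ℝ) (ν : (Fin m → X) → ℝ) :
    (Fin (k + m) → X) → ℝ :=
  fun y => μ (fun i => y (Fin.castAdd m i)) * ν (fun j => y (Fin.natAdd k j))

/-- Re-indexing along an equality of dimensions. -/
def castFun {m n : ℕ} (h : m = n) (μ : (Fin m → X) → ℝ) : (Fin n → X) → ℝ :=
  fun y => μ (fun i => y (Fin.cast h i))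

/-- The product measure `ω^{⊗n}` (and likewise the tensor power `ξ^{⊗n}` of a function). -/
noncomputable def prodMeas (ω : X → ℝ) (n : ℕ) : (Fin n → X) → ℝ :=
  fun y => ∏ i, ω (y i)

/-- A function on `X^n` is symmetric. -/
def IsSymmFun {n : ℕ} (f : (Fin n → X) → ℝ) : Prop :=
  ∀ (π : Equiv.Perm (Fin n)) (y : Fin n → X), f (y ∘ π) = f y

end Defs

/-- The set of surjections `Fin n → Fin k`; these correspond to set partitions of
`{1,…,n}` into `k` nonempty blocks together with an ordering of the blocks. -/
noncomputable def surjs (n k : ℕ) : Finset (Fin n → Fin k) :=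
  Finset.univ.filter (fun g => Function.Surjective g)

/-- Cardinality of the fiber `g⁻¹(i)` (the size of block `i`). -/
def fiberCard {n k : ℕ} (g : Fin n → Fin k) (i : Fin k) : ℕ :=
  (Finset.univ.filter (fun j => g j = i)).card

section Ops

variable {X : Type*} [Fintype X] [DecidableEq X]

/-- Stirling operator of the second kind `S(n,k) = Σ_{λ ∈ UP(n,k)} D_λ`:
summing the substitute-and-symmetrize operators over unordered partitions of `{1,…,n}`
into `k` nonempty blocks is the same as summing `f(y ∘ g)` over the surjections
`g : Fin n → Fin k` and dividing by `k!`. -/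
noncomputable def Sop (n k : ℕ) (f : (Fin n → X) → ℝ) : (Fin k → X) → ℝ :=
  fun y => (∑ g ∈ surjs n k, f (y ∘ g)) / k.factorial

/-- Unsigned Stirling operator of the first kind
`c(n,k) = Σ_{λ={λ₁,…,λ_k} ∈ UP(n,k)} (|λ₁|−1)!⋯(|λ_k|−1)! · D_λ`. -/
noncomputable def cop (n k : ℕ) (f : (Fin n → X) → ℝ) : (Fin k → X) → ℝ :=
  fun y => (∑ g ∈ surjs n k, (∏ i : Fin k, ((fiberCard g i - 1).factorial : ℝ)) * f (y ∘ g)) /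
    k.factorial

/-- Stirling operator of the first kind `s(n,k) = (−1)^{n−k} c(n,k)`. -/
noncomputable def sop (n k : ℕ) (f : (Fin n → X) → ℝ) : (Fin k → X) → ℝ :=
  fun y => (-1 : ℝ) ^ (n - k) * cop n k f y

/-- Lah operator `L(n,k) = Σ_{λ={λ₁,…,λ_k} ∈ UP(n,k)} |λ₁|!⋯|λ_k|! · D_λ`. -/
noncomputable def Lop (n k : ℕ) (f : (Fin n → X) → ℝ) : (Fin k → X) → ℝ :=
  fun y => (∑ g ∈ surjs n k, (∏ i : Fin k, ((fiberCard g i).factorial : ℝ)) * f (y ∘ g)) /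
    k.factorial

end Ops

/-- The first-order differential operator `⟨ω,ξ∂⟩` on functions of the measure variable:
`(⟨ω,ξ∂⟩F)(ω) = Σ_{x∈X} ω({x})ξ(x)·(d/dt)|_{t=0} F(ω+tδ_x)`. -/
noncomputable def measDirDeriv {X : Type*} [Fintype X] [DecidableEq X]
    (ξ : X → ℝ) (F : (X → ℝ) → ℝ) : (X → ℝ) → ℝ :=
  fun ω => ∑ x, ω x * ξ x *
    deriv (fun t : ℝ => F (fun a => ω a + t * (if a = x then 1 else 0))) 0


/-!
The coefficient is the complete Bell polynomial `B_n(m_1, …, m_n)` in the moments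
`m_c = ⟨ω, ξ^c φ⟩`: summing over surjections `Fin n → Fin k` and dividing by `k!` is summing over
set partitions of `{1,…,n}` the product of `m_{|block|}`. The operator `⟨ω,ξ∂⟩` is a derivation
with `⟨ω,ξ∂⟩ m_c = m_{c+1}` and `⟨ω,ξ∂⟩ e^{⟨ω,φ⟩} = m_1 e^{⟨ω,φ⟩}`, so the claim reduces to the
recursion `B_{n+1} = ∂B_n + m_1 B_n`, where `∂` is the derivation shifting each `m_c` to `m_{c+1}`:
a partition of `{1,…,n+1}` either adds `n+1` to a block of a partition of `{1,…,n}` (giving `∂B_n`)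
or has `{n+1}` as a block (giving `m_1 B_n`).
-/

open Function

theorem mem_surjs {n k : ℕ} {g : Fin n → Fin k} : g ∈ surjs n k ↔ Surjective g := by
  simp [surjs]

theorem surjs_eq_empty_of_lt {n k : ℕ} (h : n < k) : surjs n k = ∅ :=
  eq_empty_of_forall_notMem fun g hg =>
    absurd h (not_lt.2 (by simpa using Fintype.card_le_of_surjective g (mem_surjs.1 hg)))

theorem surjs_succ_zero (n : ℕ) : surjs (n + 1) 0 = ∅ :=
  eq_empty_of_forall_notMem fun g _ => (g 0).elim0

theorem fiberCard_snoc {n k : ℕ} (g : Fin n → Fin k) (j i : Fin k) :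
    fiberCard (Fin.snoc g j : Fin (n + 1) → Fin k) i = fiberCard g i + if j = i then 1 else 0 := by
  simp only [fiberCard, card_filter]
  rw [Fin.sum_univ_castSucc]
  simp [Fin.snoc_castSucc, Fin.snoc_last]

theorem fiberCard_snoc_succAbove_self {n k : ℕ} (g : Fin n → Fin k) (i₀ : Fin (k + 1)) :
    fiberCard (Fin.snoc (i₀.succAbove ∘ g) i₀ : Fin (n + 1) → Fin (k + 1)) i₀ = 1 := by
  simp only [fiberCard, card_filter]
  rw [Fin.sum_univ_castSucc]
  simp [Fin.snoc_castSucc, Fin.snoc_last, Fin.succAbove_ne]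

theorem fiberCard_snoc_succAbove_succAbove {n k : ℕ} (g : Fin n → Fin k) (i₀ : Fin (k + 1))
    (j : Fin k) :
    fiberCard (Fin.snoc (i₀.succAbove ∘ g) i₀ : Fin (n + 1) → Fin (k + 1)) (i₀.succAbove j) =
      fiberCard g j := by
  simp only [fiberCard, card_filter]
  rw [Fin.sum_univ_castSucc]
  simp [Fin.snoc_castSucc, Fin.snoc_last, Fin.ne_succAbove i₀ j]

theorem prod_comp_eq_prod_pow_fiberCard {β : Type*} [CommMonoid β] {n k : ℕ}
    (g : Fin n → Fin k) (f : Fin k → β) : ∏ t, f (g t) = ∏ i, f i ^ fiberCard g i := by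
  simp only [fiberCard, ← prod_fiberwise' univ g f, prod_const]

theorem prod_fiberCard_snoc {β : Type*} [CommMonoid β] (M : ℕ → β) {n k : ℕ}
    (g : Fin n → Fin k) (j : Fin k) :
    ∏ i, M (fiberCard (Fin.snoc g j : Fin (n + 1) → Fin k) i) =
      (∏ i ∈ univ.erase j, M (fiberCard g i)) * M (fiberCard g j + 1) := by
  rw [← prod_erase_mul _ _ (mem_univ j), fiberCard_snoc, if_pos rfl]
  congr 1
  refine prod_congr rfl fun i hi => ?_
  rw [fiberCard_snoc, if_neg (ne_of_mem_erase hi).symm, add_zero]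

theorem prod_fiberCard_snoc_succAbove {β : Type*} [CommMonoid β] (M : ℕ → β) {n k : ℕ}
    (g : Fin n → Fin k) (i₀ : Fin (k + 1)) :
    ∏ i, M (fiberCard (Fin.snoc (i₀.succAbove ∘ g) i₀ : Fin (n + 1) → Fin (k + 1)) i) =
      M 1 * ∏ i, M (fiberCard g i) := by
  simp only [Fin.prod_univ_succAbove _ i₀, fiberCard_snoc_succAbove_self,
    fiberCard_snoc_succAbove_succAbove]

theorem sum_surjs_succ_filter_surjective_init {β : Type*} [AddCommMonoid β] {n k : ℕ}
    (f : (Fin (n + 1) → Fin k) → β) :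
    ∑ g ∈ surjs (n + 1) k with Surjective (Fin.init g), f g =
      ∑ g ∈ surjs n k, ∑ j, f (Fin.snoc g j) := by
  rw [← sum_product']
  refine (sum_nbij'
    (fun p : (Fin n → Fin k) × Fin k => (Fin.snoc p.1 p.2 : Fin (n + 1) → Fin k))
    (fun g => (Fin.init g, g (Fin.last n))) ?_ ?_ ?_ ?_ fun _ _ => rfl).symm
  · rintro ⟨g, j⟩ hp
    simp only [mem_product, mem_surjs, mem_filter,
      Fin.init_snoc] at hp ⊢
    refine ⟨fun i => ?_, hp.1⟩
    obtain ⟨t, ht⟩ := hp.1 i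
    exact ⟨t.castSucc, by simpa using ht⟩
  · intro g hg
    simp only [mem_filter, mem_product] at hg ⊢
    exact ⟨mem_surjs.2 hg.2, mem_univ _⟩
  · rintro ⟨g, j⟩ _
    simp
  · intro g _
    exact Fin.snoc_init_self g

theorem sum_surjs_succ_filter_not_surjective_init {β : Type*} [AddCommMonoid β] {n k : ℕ}
    (f : (Fin (n + 1) → Fin (k + 1)) → β) :
    ∑ g ∈ surjs (n + 1) (k + 1) with ¬Surjective (Fin.init g), f g =
      ∑ i₀, ∑ g ∈ surjs n k, f (Fin.snoc (i₀.succAbove ∘ g) i₀) := by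
  rw [← sum_product']
  refine (sum_bij
    (fun p _ => (Fin.snoc (p.1.succAbove ∘ p.2) p.1 : Fin (n + 1) → Fin (k + 1)))
    ?_ ?_ ?_ fun _ _ => rfl).symm
  · rintro ⟨i₀, g⟩ hp
    simp only [mem_product, mem_surjs, mem_filter, Fin.init_snoc] at hp ⊢
    refine ⟨fun i => ?_, fun hs => ?_⟩
    · rcases eq_or_ne i i₀ with rfl | hne
      · exact ⟨Fin.last n, by simp⟩
      · obtain ⟨j, rfl⟩ := Fin.exists_succAbove_eq hne
        obtain ⟨t, rfl⟩ := hp.2 j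
        exact ⟨t.castSucc, by simp⟩
    · obtain ⟨t, ht⟩ := hs i₀
      exact Fin.succAbove_ne i₀ (g t) ht
  · rintro ⟨i₀, g⟩ _ ⟨i₁, g₁⟩ _ h
    obtain rfl : i₀ = i₁ := by simpa using congrFun h (Fin.last n)
    have h' := congrArg Fin.init h
    simp only [Fin.init_snoc] at h'
    rw [Fin.succAbove_right_injective.comp_left h']
  · intro g hg
    simp only [mem_filter, mem_surjs, Surjective, not_forall] at hg
    obtain ⟨hsurj, i₀, hi₀⟩ := hg
    have hlast : g (Fin.last n) = i₀ := by
      obtain ⟨s, hs⟩ := hsurj i₀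
      rcases Fin.eq_castSucc_or_eq_last s with ⟨t, rfl⟩ | rfl
      · exact absurd ⟨t, hs⟩ hi₀
      · exact hs
    choose G hG using fun t => Fin.exists_succAbove_eq (fun h => hi₀ ⟨t, h⟩)
    refine ⟨(i₀, G), mem_product.2 ⟨mem_univ _, mem_surjs.2 fun j => ?_⟩, ?_⟩
    · obtain ⟨s, hs⟩ := hsurj (i₀.succAbove j)
      rcases Fin.eq_castSucc_or_eq_last s with ⟨t, rfl⟩ | rfl
      · exact ⟨t, Fin.succAbove_right_injective (by rw [hG t]; exact hs)⟩
      · exact absurd (hlast.symm.trans hs).symm (Fin.succAbove_ne i₀ j)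
    · rw [← Fin.snoc_init_self g, hlast]
      congr 1
      funext t
      exact hG t

section CompleteBell

variable {K : Type*} [Field K]

noncomputable def completeBell (M : ℕ → K) (n : ℕ) : K :=
  ∑ k ∈ range (n + 1), (∑ g ∈ surjs n k, ∏ i, M (fiberCard g i)) / k.factorial

noncomputable def completeBellDeriv (M M' : ℕ → K) (n : ℕ) : K :=
  ∑ k ∈ range (n + 1),
    (∑ g ∈ surjs n k, ∑ j, (∏ i ∈ univ.erase j, M (fiberCard g i)) * M' (fiberCard g j)) /
      k.factorial

theorem completeBell_zero (M : ℕ → K) : completeBell M 0 = 1 := by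
  have : surjs 0 0 = univ := filter_true_of_mem fun _ _ i => i.elim0
  simp [completeBell, this]

theorem completeBell_eq_sum_Icc (M : ℕ → K) {n : ℕ} (hn : 1 ≤ n) :
    completeBell M n =
      ∑ k ∈ Icc 1 n, (∑ g ∈ surjs n k, ∏ i, M (fiberCard g i)) / k.factorial := by
  obtain ⟨n, rfl⟩ := Nat.exists_eq_add_of_le' hn
  rw [completeBell, sum_range_eq_add_Ico _ (by omega), surjs_succ_zero, sum_empty, zero_div,
    zero_add, Ico_add_one_right_eq_Icc]

theorem completeBell_succ [CharZero K] (M : ℕ → K) (n : ℕ) :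
    completeBell M (n + 1) =
      completeBellDeriv M (fun c => M (c + 1)) n + M 1 * completeBell M n := by
  have hA : completeBellDeriv M (fun c => M (c + 1)) n = ∑ k ∈ range (n + 2),
      (∑ g ∈ surjs (n + 1) k with Surjective (Fin.init g), ∏ i, M (fiberCard g i)) /
        k.factorial := by
    simp only [sum_surjs_succ_filter_surjective_init, prod_fiberCard_snoc]
    rw [sum_range_succ, surjs_eq_empty_of_lt n.lt_succ_self, sum_empty, zero_div,
      add_zero, completeBellDeriv]
  have hB : M 1 * completeBell M n = ∑ k ∈ range (n + 2),
      (∑ g ∈ surjs (n + 1) k with ¬Surjective (Fin.init g), ∏ i, M (fiberCard g i)) /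
        k.factorial := by
    rw [sum_range_succ', surjs_succ_zero, filter_empty, sum_empty, zero_div,
      add_zero, completeBell, mul_sum]
    refine sum_congr rfl fun k _ => ?_
    simp only [sum_surjs_succ_filter_not_surjective_init, prod_fiberCard_snoc_succAbove,
      sum_const, card_univ, Fintype.card_fin, nsmul_eq_mul, Nat.factorial_succ,
      ← mul_sum]
    push_cast
    field_simp
  rw [hA, hB, ← sum_add_distrib]
  simp only [← add_div, sum_filter_add_sum_filter_not]
  rfl

theorem sum_mul_completeBellDeriv {ι : Type*} (s : Finset ι) (w : ι → K)
    (M : ℕ → K) (M' : ι → ℕ → K) (n : ℕ) :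
    ∑ x ∈ s, w x * completeBellDeriv M (M' x) n =
      completeBellDeriv M (fun c => ∑ x ∈ s, w x * M' x c) n := by
  simp only [completeBellDeriv, mul_sum, sum_div]
  rw [sum_comm]
  refine sum_congr rfl fun k _ => ?_
  rw [sum_comm]
  refine sum_congr rfl fun g _ => ?_
  rw [sum_comm]
  refine sum_congr rfl fun j _ => ?_
  refine sum_congr rfl fun x _ => ?_
  ring

end CompleteBell

theorem hasDerivAt_completeBell {𝕜 : Type*} [NontriviallyNormedField 𝕜] {M : 𝕜 → ℕ → 𝕜}
    {M' : ℕ → 𝕜} {t₀ : 𝕜} (h : ∀ c, HasDerivAt (fun t => M t c) (M' c) t₀) (n : ℕ) :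
    HasDerivAt (fun t => completeBell (M t) n) (completeBellDeriv (M t₀) M' n) t₀ := by
  unfold completeBell completeBellDeriv
  refine HasDerivAt.fun_sum fun k _ => HasDerivAt.div_const (HasDerivAt.fun_sum fun g _ => ?_) _
  simpa using HasDerivAt.fun_finsetProd fun i _ => h (fiberCard g i)

section Moments

variable {X : Type*} [Fintype X]

noncomputable def moment (ξ φ ω : X → ℝ) (c : ℕ) : ℝ :=
  ∑ a, ω a * (ξ a ^ c * φ a)

theorem hasDerivAt_sum_add_mul_ite_mul [DecidableEq X] (ω f : X → ℝ) (x : X) (t₀ : ℝ) :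
    HasDerivAt (fun t : ℝ => ∑ a, (ω a + t * if a = x then 1 else 0) * f a) (f x) t₀ := by
  have hline : (fun t : ℝ => ∑ a, (ω a + t * if a = x then 1 else 0) * f a) =
      fun t => ∑ a, ω a * f a + t * f x := by
    funext t
    simp [add_mul, sum_add_distrib]
  rw [hline]
  exact (hasDerivAt_mul_const (f x)).const_add _

theorem measDirDeriv_completeBell_moment_mul_exp [DecidableEq X] (ξ φ : X → ℝ) (n : ℕ)
    (ω : X → ℝ) :
    measDirDeriv ξ (fun η => completeBell (moment ξ φ η) n * Real.exp (∑ a, η a * φ a)) ω =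
      completeBell (moment ξ φ ω) (n + 1) * Real.exp (∑ a, ω a * φ a) := by
  set E := Real.exp (∑ a, ω a * φ a)
  have hline : ∀ x, HasDerivAt
      (fun t : ℝ => completeBell (moment ξ φ fun a => ω a + t * if a = x then 1 else 0) n *
        Real.exp (∑ a, (ω a + t * if a = x then 1 else 0) * φ a))
      (completeBellDeriv (moment ξ φ ω) (fun c => ξ x ^ c * φ x) n * E +
        completeBell (moment ξ φ ω) n * (E * φ x)) 0 := fun x => by
    have hM := hasDerivAt_completeBell
      (M := fun t => moment ξ φ fun a => ω a + t * if a = x then 1 else 0)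
      (fun c => hasDerivAt_sum_add_mul_ite_mul ω (fun a => ξ a ^ c * φ a) x 0) n
    have hE := (hasDerivAt_sum_add_mul_ite_mul ω φ x 0).exp
    have h := hM.fun_mul hE
    simp only [zero_mul, add_zero] at h
    exact h
  have hD : ∑ x, ω x * ξ x * completeBellDeriv (moment ξ φ ω) (fun c => ξ x ^ c * φ x) n =
      completeBellDeriv (moment ξ φ ω) (fun c => moment ξ φ ω (c + 1)) n := by
    rw [sum_mul_completeBellDeriv]
    congr 1
    funext c
    simp only [moment, pow_succ]
    exact sum_congr rfl fun a _ => by ring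
  have h1 : ∑ x, ω x * ξ x * φ x = moment ξ φ ω 1 := by simp [moment, mul_assoc]
  simp only [measDirDeriv, (hline _).deriv]
  rw [completeBell_succ, ← hD, ← h1, add_mul, sum_mul, sum_mul, sum_mul,
    ← sum_add_distrib]
  exact sum_congr rfl fun x _ => by ring

theorem iterate_measDirDeriv_exp [DecidableEq X] (ξ φ : X → ℝ) (n : ℕ) :
    (measDirDeriv ξ)^[n] (fun η => Real.exp (∑ a, η a * φ a)) =
      fun η => completeBell (moment ξ φ η) n * Real.exp (∑ a, η a * φ a) := by
  induction n with
  | zero => simp [completeBell_zero]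
  | succ n ih =>
    funext ω
    rw [Function.iterate_succ_apply', ih, measDirDeriv_completeBell_moment_mul_exp]

theorem pairing_prodMeas_Sop_mul_prod (ξ φ ω : X → ℝ) (n k : ℕ) :
    pairing k (prodMeas ω k)
        (fun y => Sop n k (fun v : Fin n → X => ∏ t, ξ (v t)) y * ∏ t, φ (y t)) =
      (∑ g ∈ surjs n k, ∏ i, moment ξ φ ω (fiberCard g i)) / k.factorial := by
  simp only [pairing, prodMeas, Sop, moment, Fintype.prod_sum, sum_div]
  rw [sum_comm]
  refine sum_congr rfl fun y _ => ?_
  rw [sum_mul, mul_sum]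
  refine sum_congr rfl fun g _ => ?_
  simp only [comp_apply]
  rw [prod_comp_eq_prod_pow_fiberCard g (fun i => ξ (y i)), prod_mul_distrib,
    prod_mul_distrib]
  ring

end Moments

/-- applying `⟨ω,ξ∂⟩` `n` times to `e^{⟨ω,φ⟩}` gives
`(Σ_{k=1}^{n} ⟨ω^{⊗k}, (S(n,k)ξ^{⊗n})·φ^{⊗k}⟩)·e^{⟨ω,φ⟩}`. -/
theorem gruenert_exponential
    {X : Type*} [Fintype X] [DecidableEq X] (ξ φ : X → ℝ) {n : ℕ} (hn : 1 ≤ n)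
    (ω : X → ℝ) :
    (measDirDeriv ξ)^[n] (fun η => Real.exp (∑ x, η x * φ x)) ω
      = (∑ k ∈ Finset.Icc 1 n,
            pairing k (prodMeas ω k)
              (fun y => Sop n k (fun v : Fin n → X => ∏ t, ξ (v t)) y * ∏ t, φ (y t)))
          * Real.exp (∑ x, ω x * φ x) := by
  simp only [pairing_prodMeas_Sop_mul_prod]
  rw [← completeBell_eq_sum_Icc _ hn, iterate_measDirDeriv_exp]
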